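/- Let γ ∈ SL₂(ℝ), m ∈ ℤ, and let F be a smooth function on the upper half plane. For s ∈ ℂ and k ∈ ℤ, set μ(s,k,F)(z) = F(γz) Im(γz)^s e(mγz) ε(γ,z)^{-k}, where ε(γ,z) = j(γ,z)/|j(γ,z)|. Then R_k μ(s,k,F) = 2i μ(s+1, k+2, dF/dz) + (s + k/2) μ(s, k+2, F) - 4πm μ(s+1, k+2, F), where R_k = 2iy d/dz + k/2. -/

import Mathlib

open Real Complex

/-- The automorphy factor `j(γ,z) = cz + d`. -/
noncomputable def jfac (γ : Matrix.SpecialLinearGroup (Fin 2) ℝ) (z : ℂ) : ℂ :=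
  ((γ : Matrix (Fin 2) (Fin 2) ℝ) 1 0 : ℝ) * z + ((γ : Matrix (Fin 2) (Fin 2) ℝ) 1 1 : ℝ)

/-- The Möbius action `γz = (az+b)/(cz+d)`. -/
noncomputable def moeb (γ : Matrix.SpecialLinearGroup (Fin 2) ℝ) (z : ℂ) : ℂ :=
  (((γ : Matrix (Fin 2) (Fin 2) ℝ) 0 0 : ℝ) * z + ((γ : Matrix (Fin 2) (Fin 2) ℝ) 0 1 : ℝ))
    / jfac γ z

/-- `ε(γ,z) = j(γ,z)/|j(γ,z)|`. -/
noncomputable def eps (γ : Matrix.SpecialLinearGroup (Fin 2) ℝ) (z : ℂ) : ℂ :=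
  jfac γ z / ((‖jfac γ z‖ : ℝ) : ℂ)

/-- The Wirtinger derivative `d/dz = (1/2)(∂/∂x - i ∂/∂y)`. -/
noncomputable def wdz (f : ℂ → ℂ) (z : ℂ) : ℂ :=
  (1 / 2) * (fderiv ℝ f z 1 - I * fderiv ℝ f z I)

/-- The Maass raising operator `R_k = 2iy d/dz + k/2`. -/
noncomputable def Rop (k : ℤ) (f : ℂ → ℂ) (z : ℂ) : ℂ :=
  2 * I * (z.im : ℂ) * wdz f z + (k : ℂ) / 2 * f z

/-- `μ(s,k,F)(z) = F(γz) Im(γz)^s e(mγz) ε(γ,z)^{-k}`. -/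
noncomputable def mufn (γ : Matrix.SpecialLinearGroup (Fin 2) ℝ) (m : ℤ) (s : ℂ) (k : ℤ)
    (F : ℂ → ℂ) (z : ℂ) : ℂ :=
  F (moeb γ z) * ((moeb γ z).im : ℂ) ^ s * Complex.exp (2 * π * I * m * moeb γ z)
    * eps γ z ^ (-k : ℤ)

set_option maxHeartbeats 1000000



lemma wdz_congr {f g : ℂ → ℂ} {z : ℂ} (h : f =ᶠ[nhds z] g) : wdz f z = wdz g z := by
  unfold wdz; rw [Filter.EventuallyEq.fderiv_eq h]

lemma wdz_mul {f g : ℂ → ℂ} {z : ℂ} (hf : DifferentiableAt ℝ f z)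
    (hg : DifferentiableAt ℝ g z) :
    wdz (fun w => f w * g w) z = wdz f z * g z + f z * wdz g z := by
  unfold wdz
  rw [fderiv_fun_mul hf hg]
  simp only [ContinuousLinearMap.add_apply, ContinuousLinearMap.smul_apply, smul_eq_mul]
  ring

lemma wdz_outer {H f : ℂ → ℂ} {H' : ℂ} {z : ℂ} (hH : HasDerivAt H H' (f z))
    (hf : DifferentiableAt ℝ f z) :
    wdz (fun w => H (f w)) z = H' * wdz f z := by
  have h := hH.comp_hasFDerivAt z hf.hasFDerivAt
  unfold wdz
  rw [show (fun w => H (f w)) = H ∘ f from rfl, h.fderiv]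
  simp only [ContinuousLinearMap.smul_apply, smul_eq_mul]
  ring

lemma wdz_inner {F h : ℂ → ℂ} {h' : ℂ} {z : ℂ} (hF : DifferentiableAt ℝ F (h z))
    (hh : HasDerivAt h h' z) :
    wdz (fun w => F (h w)) z = wdz F (h z) * h' := by
  have hhr : HasFDerivAt h ((ContinuousLinearMap.id ℂ ℂ).smulRight h') z := by
    exact hh.hasFDerivAt
  have h2 := hF.hasFDerivAt.comp z (hhr.restrictScalars ℝ)
  unfold wdz
  rw [show (fun w => F (h w)) = F ∘ h from rfl, h2.fderiv]
  set L := fderiv ℝ F (h z)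
  simp only [ContinuousLinearMap.coe_comp', Function.comp_apply,
    ContinuousLinearMap.coe_restrictScalars', ContinuousLinearMap.smulRight_apply,
    ContinuousLinearMap.id_apply, smul_eq_mul, one_mul]
  have hd : h' = (h'.re : ℂ) + (h'.im : ℂ) * I := (Complex.re_add_im h').symm
  rw [hd]
  have e1 : L ((h'.re : ℂ) + (h'.im : ℂ) * I) = (h'.re : ℝ) • L 1 + (h'.im : ℝ) • L I := by
    rw [← L.map_smul, ← L.map_smul, ← L.map_add]
    norm_num [Complex.real_smul]
  have e2 : L (I * ((h'.re : ℂ) + (h'.im : ℂ) * I))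
      = (h'.re : ℝ) • L I - (h'.im : ℝ) • L 1 := by
    have : I * ((h'.re : ℂ) + (h'.im : ℂ) * I) = (h'.re : ℝ) • I + (-h'.im : ℝ) • (1:ℂ) := by
      push_cast [Complex.real_smul]; ring_nf; rw [Complex.I_sq]; ring
    rw [this, L.map_add, L.map_smul, L.map_smul]
    push_cast [Complex.real_smul]; ring
  rw [e1, e2]
  push_cast [Complex.real_smul]
  ring_nf
  rw [Complex.I_sq]
  ring

lemma wdz_holo {h : ℂ → ℂ} {h' : ℂ} {z : ℂ} (hh : HasDerivAt h h' z) : wdz h z = h' := by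
  have hhr : HasFDerivAt h ((ContinuousLinearMap.id ℂ ℂ).smulRight h') z := by
    exact hh.hasFDerivAt
  unfold wdz
  rw [(hhr.restrictScalars ℝ).fderiv]
  simp only [ContinuousLinearMap.coe_restrictScalars', ContinuousLinearMap.smulRight_apply,
    ContinuousLinearMap.id_apply, smul_eq_mul, one_mul]
  ring_nf
  rw [Complex.I_sq]; ring

lemma wdz_conj_holo {h : ℂ → ℂ} {h' : ℂ} {z : ℂ} (hh : HasDerivAt h h' z) :
    wdz (fun w => starRingEnd ℂ (h w)) z = 0 := by
  have hhr : HasFDerivAt h ((ContinuousLinearMap.id ℂ ℂ).smulRight h') z := by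
    exact hh.hasFDerivAt
  have h2 := (Complex.conjCLE.hasFDerivAt).comp z (hhr.restrictScalars ℝ)
  unfold wdz
  rw [show (fun w => starRingEnd ℂ (h w)) = (⇑Complex.conjCLE) ∘ h from rfl, h2.fderiv]
  simp only [ContinuousLinearMap.coe_comp', Function.comp_apply,
    ContinuousLinearMap.coe_restrictScalars', ContinuousLinearMap.smulRight_apply,
    ContinuousLinearMap.id_apply, smul_eq_mul, one_mul,
    ContinuousLinearEquiv.coe_coe, Complex.conjCLE_apply]
  rw [map_mul]
  simp [Complex.conj_I]
  ring_nf
  rw [Complex.I_sq]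
  ring

lemma wdz_const_mul (c : ℂ) {f : ℂ → ℂ} {z : ℂ} (hf : DifferentiableAt ℝ f z) :
    wdz (fun w => c * f w) z = c * wdz f z := by
  have h : HasDerivAt (fun y : ℂ => c * y) c (f z) := by
    simpa using (hasDerivAt_id (f z)).const_mul c
  exact wdz_outer h hf

lemma wdz_sub {f g : ℂ → ℂ} {z : ℂ} (hf : DifferentiableAt ℝ f z)
    (hg : DifferentiableAt ℝ g z) :
    wdz (fun w => f w - g w) z = wdz f z - wdz g z := by
  unfold wdz
  rw [fderiv_fun_sub hf hg]
  simp only [ContinuousLinearMap.sub_apply]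
  ring

lemma diffR_of_holo {h : ℂ → ℂ} {h' z : ℂ} (hh : HasDerivAt h h' z) :
    DifferentiableAt ℝ h z :=
  (hh.hasFDerivAt.restrictScalars ℝ).differentiableAt

lemma diffR_conj_holo {h : ℂ → ℂ} {h' z : ℂ} (hh : HasDerivAt h h' z) :
    DifferentiableAt ℝ (fun w => starRingEnd ℂ (h w)) z :=
  Complex.conjCLE.differentiableAt.comp z (diffR_of_holo hh)

lemma diffR_im_holo {h : ℂ → ℂ} {h' z : ℂ} (hh : HasDerivAt h h' z) :
    DifferentiableAt ℝ (fun w => ((h w).im : ℂ)) z := by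
  exact Complex.ofRealCLM.differentiableAt.comp z
    (Complex.imCLM.differentiableAt.comp z (diffR_of_holo hh))

lemma wdz_im_holo {h : ℂ → ℂ} {h' : ℂ} {z : ℂ} (hh : HasDerivAt h h' z) :
    wdz (fun w => ((h w).im : ℂ)) z = h' / (2 * I) := by
  have hfe : (fun w => ((h w).im : ℂ))
      = fun w => (1 / (2 * I)) * (h w - starRingEnd ℂ (h w)) := by
    funext w
    rw [Complex.sub_conj]
    have hI : (2 : ℂ) * I ≠ 0 := by simp [Complex.I_ne_zero]
    field_simp
    push_cast; ring
  rw [hfe, wdz_const_mul (f := fun w => h w - starRingEnd ℂ (h w)) _ ((diffR_of_holo hh).sub (diffR_conj_holo hh)),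
    wdz_sub (diffR_of_holo hh) (diffR_conj_holo hh), wdz_holo hh, wdz_conj_holo hh]
  ring



lemma det_rel (γ : Matrix.SpecialLinearGroup (Fin 2) ℝ) :
    (γ : Matrix (Fin 2) (Fin 2) ℝ) 0 0 * (γ : Matrix (Fin 2) (Fin 2) ℝ) 1 1
      - (γ : Matrix (Fin 2) (Fin 2) ℝ) 0 1 * (γ : Matrix (Fin 2) (Fin 2) ℝ) 1 0 = 1 := by
  have h := γ.prop
  rwa [Matrix.det_fin_two] at h

lemma jfac_im (γ : Matrix.SpecialLinearGroup (Fin 2) ℝ) (z : ℂ) :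
    (jfac γ z).im = (γ : Matrix (Fin 2) (Fin 2) ℝ) 1 0 * z.im := by
  simp [jfac]

lemma jfac_re (γ : Matrix.SpecialLinearGroup (Fin 2) ℝ) (z : ℂ) :
    (jfac γ z).re = (γ : Matrix (Fin 2) (Fin 2) ℝ) 1 0 * z.re
      + (γ : Matrix (Fin 2) (Fin 2) ℝ) 1 1 := by
  simp [jfac]

lemma jfac_ne (γ : Matrix.SpecialLinearGroup (Fin 2) ℝ) {z : ℂ} (hz : 0 < z.im) :
    jfac γ z ≠ 0 := by
  intro h
  have him : (γ : Matrix (Fin 2) (Fin 2) ℝ) 1 0 * z.im = 0 := by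
    rw [← jfac_im γ z, h]; rfl
  have hc : (γ : Matrix (Fin 2) (Fin 2) ℝ) 1 0 = 0 := by
    rcases mul_eq_zero.1 him with h' | h'
    · exact h'
    · exact absurd h' hz.ne'
  have hd : (γ : Matrix (Fin 2) (Fin 2) ℝ) 1 1 = 0 := by
    have hre : (jfac γ z).re = 0 := by rw [h]; rfl
    rw [jfac_re, hc] at hre; linarith
  have := det_rel γ
  rw [hc, hd] at this
  norm_num at this

lemma moeb_im (γ : Matrix.SpecialLinearGroup (Fin 2) ℝ) {z : ℂ} (hz : 0 < z.im) :
    (moeb γ z).im * Complex.normSq (jfac γ z) = z.im := by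
  have hns : Complex.normSq (jfac γ z) ≠ 0 := (Complex.normSq_pos.2 (jfac_ne γ hz)).ne'
  rw [moeb, Complex.div_im]
  have h1 : (((γ : Matrix (Fin 2) (Fin 2) ℝ) 0 0 : ℂ) * z
      + ((γ : Matrix (Fin 2) (Fin 2) ℝ) 0 1 : ℂ)).im
      = (γ : Matrix (Fin 2) (Fin 2) ℝ) 0 0 * z.im := by simp
  have h2 : (((γ : Matrix (Fin 2) (Fin 2) ℝ) 0 0 : ℂ) * z
      + ((γ : Matrix (Fin 2) (Fin 2) ℝ) 0 1 : ℂ)).re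
      = (γ : Matrix (Fin 2) (Fin 2) ℝ) 0 0 * z.re
        + (γ : Matrix (Fin 2) (Fin 2) ℝ) 0 1 := by simp
  rw [h1, h2, jfac_im, jfac_re, div_sub_div_same, div_mul_cancel₀ _ hns]
  linear_combination z.im * det_rel γ

lemma moeb_im_pos (γ : Matrix.SpecialLinearGroup (Fin 2) ℝ) {z : ℂ} (hz : 0 < z.im) :
    0 < (moeb γ z).im := by
  have hns : 0 < Complex.normSq (jfac γ z) :=
    Complex.normSq_pos.2 (jfac_ne γ hz)
  have := moeb_im γ hz
  nlinarith

lemma hasDerivAt_jfac (γ : Matrix.SpecialLinearGroup (Fin 2) ℝ) (z : ℂ) :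
    HasDerivAt (jfac γ) ((γ : Matrix (Fin 2) (Fin 2) ℝ) 1 0 : ℂ) z := by
  unfold jfac
  simpa using ((hasDerivAt_id z).const_mul
    (((γ : Matrix (Fin 2) (Fin 2) ℝ) 1 0 : ℝ) : ℂ)).add_const (((γ : Matrix (Fin 2) (Fin 2) ℝ) 1 1 : ℝ) : ℂ)

lemma hasDerivAt_moeb (γ : Matrix.SpecialLinearGroup (Fin 2) ℝ) {z : ℂ} (hz : 0 < z.im) :
    HasDerivAt (moeb γ) ((jfac γ z) ^ (-2 : ℤ)) z := by
  have hnum : HasDerivAt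
      (fun w => (((γ : Matrix (Fin 2) (Fin 2) ℝ) 0 0 : ℝ) : ℂ) * w
        + (((γ : Matrix (Fin 2) (Fin 2) ℝ) 0 1 : ℝ) : ℂ))
      (((γ : Matrix (Fin 2) (Fin 2) ℝ) 0 0 : ℝ) : ℂ) z := by
    simpa using ((hasDerivAt_id z).const_mul
      (((γ : Matrix (Fin 2) (Fin 2) ℝ) 0 0 : ℝ) : ℂ)).add_const (((γ : Matrix (Fin 2) (Fin 2) ℝ) 0 1 : ℝ) : ℂ)
  have h := hnum.div (hasDerivAt_jfac γ z) (jfac_ne γ hz)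
  have hdet : ((γ : Matrix (Fin 2) (Fin 2) ℝ) 0 0 : ℂ)
      * ((γ : Matrix (Fin 2) (Fin 2) ℝ) 1 1 : ℂ)
      - ((γ : Matrix (Fin 2) (Fin 2) ℝ) 0 1 : ℂ)
      * ((γ : Matrix (Fin 2) (Fin 2) ℝ) 1 0 : ℂ) = 1 := by
    rw [← Complex.ofReal_mul, ← Complex.ofReal_mul, ← Complex.ofReal_sub, det_rel γ]
    norm_num
  have key : ((γ : Matrix (Fin 2) (Fin 2) ℝ) 0 0 : ℂ) * jfac γ z
      - (((γ : Matrix (Fin 2) (Fin 2) ℝ) 0 0 : ℂ) * z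
        + ((γ : Matrix (Fin 2) (Fin 2) ℝ) 0 1 : ℂ))
        * ((γ : Matrix (Fin 2) (Fin 2) ℝ) 1 0 : ℂ) = 1 := by
    rw [jfac]
    linear_combination hdet
  exact h.congr_deriv (by
    rw [key, zpow_neg, inv_eq_one_div]
    norm_cast)



lemma ofReal_zpow_eq_exp {t : ℝ} (ht : 0 < t) (k : ℤ) :
    ((t : ℂ)) ^ k = Complex.exp ((k : ℂ) * Complex.log (t : ℂ)) := by
  rw [Complex.exp_int_mul, Complex.exp_log (by exact_mod_cast ht.ne')]

lemma abs_pow_eq (γ : Matrix.SpecialLinearGroup (Fin 2) ℝ) {z : ℂ} (hz : 0 < z.im) (k : ℤ) :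
    ((‖jfac γ z‖ : ℝ) : ℂ) ^ k
      = Complex.exp ((k : ℂ) / 2 * Complex.log ((Complex.normSq (jfac γ z) : ℝ) : ℂ)) := by
  have hj := jfac_ne γ hz
  have habs : 0 < ‖jfac γ z‖ := norm_pos_iff.mpr hj
  rw [ofReal_zpow_eq_exp habs k]
  congr 1
  have h1 : Complex.log ((‖jfac γ z‖ : ℝ) : ℂ)
      = ((Real.log (‖jfac γ z‖) : ℝ) : ℂ) :=
    (Complex.ofReal_log habs.le).symm
  have h2 : Complex.log ((Complex.normSq (jfac γ z) : ℝ) : ℂ)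
      = ((Real.log (Complex.normSq (jfac γ z)) : ℝ) : ℂ) :=
    (Complex.ofReal_log (Complex.normSq_nonneg _)).symm
  have h3 : Real.log (‖jfac γ z‖)
      = Real.log (Complex.normSq (jfac γ z)) / 2 := by
    rw [Complex.norm_def, Real.log_sqrt (Complex.normSq_nonneg _)]
  rw [h1, h2, h3]
  push_cast
  ring

lemma mufn_normal (γ : Matrix.SpecialLinearGroup (Fin 2) ℝ) (m : ℤ) (s : ℂ) (k : ℤ)
    (F : ℂ → ℂ) {z : ℂ} (hz : 0 < z.im) :
    mufn γ m s k F z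
      = F (moeb γ z) * Complex.exp (s * Complex.log (((moeb γ z).im : ℝ) : ℂ))
        * Complex.exp (2 * π * I * m * moeb γ z)
        * (jfac γ z ^ (-k : ℤ)
            * Complex.exp ((k : ℂ) / 2 * Complex.log ((Complex.normSq (jfac γ z) : ℝ) : ℂ))) := by
  have hj := jfac_ne γ hz
  have hY := moeb_im_pos γ hz
  have habs : ((‖jfac γ z‖ : ℝ) : ℂ) ≠ 0 := by
    simp [hj]
  rw [mufn]
  congr 1
  · congr 2
    rw [Complex.cpow_def_of_ne_zero (by exact_mod_cast hY.ne'), mul_comm]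
  · rw [eps, div_zpow, div_eq_mul_inv, ← zpow_neg, neg_neg, abs_pow_eq γ hz k]

/-- `R_k μ(s,k,F) = 2i μ(s+1, k+2, dF/dz) + (s + k/2) μ(s, k+2, F) - 4πm μ(s+1, k+2, F)`. -/
theorem Rop_mufn (γ : Matrix.SpecialLinearGroup (Fin 2) ℝ) (m : ℤ) (F : ℂ → ℂ)
    (hF : ContDiffOn ℝ (⊤ : ℕ∞) F {w : ℂ | 0 < w.im}) (s : ℂ) (k : ℤ) (z : ℂ) (hz : 0 < z.im) :
    Rop k (mufn γ m s k F) z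
      = 2 * I * mufn γ m (s + 1) (k + 2) (fun w => wdz F w) z
        + (s + (k : ℂ) / 2) * mufn γ m s (k + 2) F z
        - 4 * π * m * mufn γ m (s + 1) (k + 2) F z := by
  have hopen : IsOpen {w : ℂ | 0 < w.im} := isOpen_lt continuous_const Complex.continuous_im
  have hj := jfac_ne γ hz
  have hYr := moeb_im_pos γ hz
  have hNr : 0 < Complex.normSq (jfac γ z) := Complex.normSq_pos.2 hj
  have hmoeb := hasDerivAt_moeb γ hz
  have hjf := hasDerivAt_jfac γ z
  have hFd : DifferentiableAt ℝ F (moeb γ z) :=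
    (hF.contDiffAt (hopen.mem_nhds hYr)).differentiableAt (by simp)
  -- factor A
  have hAd : DifferentiableAt ℝ (fun w => F (moeb γ w)) z := hFd.comp z (diffR_of_holo hmoeb)
  have hA : wdz (fun w => F (moeb γ w)) z = wdz F (moeb γ z) * jfac γ z ^ (-2 : ℤ) :=
    wdz_inner hFd hmoeb
  -- factor B
  have hvd : DifferentiableAt ℝ (fun w => (((moeb γ w).im : ℝ) : ℂ)) z := diffR_im_holo hmoeb
  have hv : wdz (fun w => (((moeb γ w).im : ℝ) : ℂ)) z = jfac γ z ^ (-2 : ℤ) / (2 * I) :=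
    wdz_im_holo hmoeb
  have hlogmem : (((moeb γ z).im : ℝ) : ℂ) ∈ Complex.slitPlane := by
    rw [Complex.mem_slitPlane_iff]; left; simpa using hYr
  have hlogD := Complex.hasDerivAt_log hlogmem
  have hlogvd : DifferentiableAt ℝ (fun w => Complex.log (((moeb γ w).im : ℝ) : ℂ)) z :=
    (hlogD.comp_hasFDerivAt (h₂ := Complex.log) z hvd.hasFDerivAt).differentiableAt
  have hlogv : wdz (fun w => Complex.log (((moeb γ w).im : ℝ) : ℂ)) z
      = ((((moeb γ z).im : ℝ) : ℂ))⁻¹ * (jfac γ z ^ (-2 : ℤ) / (2 * I)) := by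
    rw [wdz_outer hlogD hvd, hv]
  have hsd : DifferentiableAt ℝ (fun w => s * Complex.log (((moeb γ w).im : ℝ) : ℂ)) z :=
    hlogvd.const_mul s
  have hsv : wdz (fun w => s * Complex.log (((moeb γ w).im : ℝ) : ℂ)) z
      = s * (((((moeb γ z).im : ℝ) : ℂ))⁻¹ * (jfac γ z ^ (-2 : ℤ) / (2 * I))) := by
    rw [wdz_const_mul s hlogvd, hlogv]
  have hBd : DifferentiableAt ℝ
      (fun w => Complex.exp (s * Complex.log (((moeb γ w).im : ℝ) : ℂ))) z :=
    ((Complex.hasDerivAt_exp _).comp_hasFDerivAt z hsd.hasFDerivAt).differentiableAt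
  have hB : wdz (fun w => Complex.exp (s * Complex.log (((moeb γ w).im : ℝ) : ℂ))) z
      = Complex.exp (s * Complex.log (((moeb γ z).im : ℝ) : ℂ))
        * (s * (((((moeb γ z).im : ℝ) : ℂ))⁻¹ * (jfac γ z ^ (-2 : ℤ) / (2 * I)))) := by
    rw [wdz_outer (Complex.hasDerivAt_exp _) hsd, hsv]
  -- factor C
  have hCD : HasDerivAt (fun w => Complex.exp (2 * π * I * m * moeb γ w))
      (Complex.exp (2 * π * I * m * moeb γ z) * (2 * π * I * m * jfac γ z ^ (-2 : ℤ))) z :=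
    (Complex.hasDerivAt_exp _).comp z (hmoeb.const_mul (2 * π * I * m))
  have hCd : DifferentiableAt ℝ (fun w => Complex.exp (2 * π * I * m * moeb γ w)) z :=
    diffR_of_holo hCD
  have hC : wdz (fun w => Complex.exp (2 * π * I * m * moeb γ w)) z
      = Complex.exp (2 * π * I * m * moeb γ z) * (2 * π * I * m * jfac γ z ^ (-2 : ℤ)) :=
    wdz_holo hCD
  -- factor D = D1 * E
  have hD1D : HasDerivAt (fun w => jfac γ w ^ (-k : ℤ))
      ((-k : ℂ) * jfac γ z ^ (-k - 1) * ((γ : Matrix (Fin 2) (Fin 2) ℝ) 1 0 : ℂ)) z := by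
    have h := (hasDerivAt_zpow (-k) (jfac γ z) (Or.inl hj)).comp z hjf
    exact h.congr_deriv (by
      push_cast
      ring)
  have hD1d : DifferentiableAt ℝ (fun w => jfac γ w ^ (-k : ℤ)) z := diffR_of_holo hD1D
  have hD1 : wdz (fun w => jfac γ w ^ (-k : ℤ)) z
      = (-k : ℂ) * jfac γ z ^ (-k - 1) * ((γ : Matrix (Fin 2) (Fin 2) ℝ) 1 0 : ℂ) :=
    wdz_holo hD1D
  have hNeq : (fun w => ((Complex.normSq (jfac γ w) : ℝ) : ℂ))
      = fun w => jfac γ w * starRingEnd ℂ (jfac γ w) :=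
    funext fun w => (Complex.mul_conj _).symm
  have hNd : DifferentiableAt ℝ (fun w => ((Complex.normSq (jfac γ w) : ℝ) : ℂ)) z := by
    rw [hNeq]; exact (diffR_of_holo hjf).mul (diffR_conj_holo hjf)
  have hNw : wdz (fun w => ((Complex.normSq (jfac γ w) : ℝ) : ℂ)) z
      = ((γ : Matrix (Fin 2) (Fin 2) ℝ) 1 0 : ℂ) * starRingEnd ℂ (jfac γ z) := by
    rw [hNeq, wdz_mul (diffR_of_holo hjf) (diffR_conj_holo hjf), wdz_holo hjf,
      wdz_conj_holo hjf]
    ring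
  have hlogNmem : ((Complex.normSq (jfac γ z) : ℝ) : ℂ) ∈ Complex.slitPlane := by
    rw [Complex.mem_slitPlane_iff]; left; simpa using hNr
  have hlogND := Complex.hasDerivAt_log hlogNmem
  have hlogNd : DifferentiableAt ℝ
      (fun w => Complex.log ((Complex.normSq (jfac γ w) : ℝ) : ℂ)) z :=
    (hlogND.comp_hasFDerivAt (h₂ := Complex.log) z hNd.hasFDerivAt).differentiableAt
  have hlogN : wdz (fun w => Complex.log ((Complex.normSq (jfac γ w) : ℝ) : ℂ)) z
      = (((Complex.normSq (jfac γ z) : ℝ) : ℂ))⁻¹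
        * (((γ : Matrix (Fin 2) (Fin 2) ℝ) 1 0 : ℂ) * starRingEnd ℂ (jfac γ z)) := by
    rw [wdz_outer hlogND hNd, hNw]
  have hkd : DifferentiableAt ℝ
      (fun w => (k : ℂ) / 2 * Complex.log ((Complex.normSq (jfac γ w) : ℝ) : ℂ)) z :=
    hlogNd.const_mul _
  have hkv : wdz (fun w => (k : ℂ) / 2 * Complex.log ((Complex.normSq (jfac γ w) : ℝ) : ℂ)) z
      = (k : ℂ) / 2 * ((((Complex.normSq (jfac γ z) : ℝ) : ℂ))⁻¹
        * (((γ : Matrix (Fin 2) (Fin 2) ℝ) 1 0 : ℂ) * starRingEnd ℂ (jfac γ z))) := by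
    rw [wdz_const_mul _ hlogNd, hlogN]
  have hEd : DifferentiableAt ℝ
      (fun w => Complex.exp ((k : ℂ) / 2 * Complex.log ((Complex.normSq (jfac γ w) : ℝ) : ℂ))) z :=
    ((Complex.hasDerivAt_exp _).comp_hasFDerivAt z hkd.hasFDerivAt).differentiableAt
  have hE : wdz (fun w =>
        Complex.exp ((k : ℂ) / 2 * Complex.log ((Complex.normSq (jfac γ w) : ℝ) : ℂ))) z
      = Complex.exp ((k : ℂ) / 2 * Complex.log ((Complex.normSq (jfac γ z) : ℝ) : ℂ))
        * ((k : ℂ) / 2 * ((((Complex.normSq (jfac γ z) : ℝ) : ℂ))⁻¹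
          * (((γ : Matrix (Fin 2) (Fin 2) ℝ) 1 0 : ℂ) * starRingEnd ℂ (jfac γ z)))) := by
    rw [wdz_outer (Complex.hasDerivAt_exp _) hkd, hkv]
  have hDd : DifferentiableAt ℝ (fun w => jfac γ w ^ (-k : ℤ)
      * Complex.exp ((k : ℂ) / 2 * Complex.log ((Complex.normSq (jfac γ w) : ℝ) : ℂ))) z :=
    hD1d.mul hEd
  have hD : wdz (fun w => jfac γ w ^ (-k : ℤ)
      * Complex.exp ((k : ℂ) / 2 * Complex.log ((Complex.normSq (jfac γ w) : ℝ) : ℂ))) z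
      = ((-k : ℂ) * jfac γ z ^ (-k - 1) * ((γ : Matrix (Fin 2) (Fin 2) ℝ) 1 0 : ℂ))
          * Complex.exp ((k : ℂ) / 2 * Complex.log ((Complex.normSq (jfac γ z) : ℝ) : ℂ))
        + jfac γ z ^ (-k : ℤ)
          * (Complex.exp ((k : ℂ) / 2 * Complex.log ((Complex.normSq (jfac γ z) : ℝ) : ℂ))
            * ((k : ℂ) / 2 * ((((Complex.normSq (jfac γ z) : ℝ) : ℂ))⁻¹
              * (((γ : Matrix (Fin 2) (Fin 2) ℝ) 1 0 : ℂ) * starRingEnd ℂ (jfac γ z))))) := by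
    rw [wdz_mul hD1d hEd, hD1, hE]
  -- assemble
  have hEq : mufn γ m s k F =ᶠ[nhds z] fun w =>
      F (moeb γ w) * Complex.exp (s * Complex.log (((moeb γ w).im : ℝ) : ℂ))
        * Complex.exp (2 * π * I * m * moeb γ w)
        * (jfac γ w ^ (-k : ℤ)
          * Complex.exp ((k : ℂ) / 2 * Complex.log ((Complex.normSq (jfac γ w) : ℝ) : ℂ))) :=
    Filter.eventuallyEq_of_mem (hopen.mem_nhds hz) fun w hw => mufn_normal γ m s k F hw
  have hABd : DifferentiableAt ℝ (fun w =>
      F (moeb γ w) * Complex.exp (s * Complex.log (((moeb γ w).im : ℝ) : ℂ))) z := hAd.mul hBd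
  have hABCd : DifferentiableAt ℝ (fun w =>
      F (moeb γ w) * Complex.exp (s * Complex.log (((moeb γ w).im : ℝ) : ℂ))
        * Complex.exp (2 * π * I * m * moeb γ w)) z := hABd.mul hCd
  have hP : wdz (mufn γ m s k F) z
      = ((wdz F (moeb γ z) * jfac γ z ^ (-2 : ℤ)
            * Complex.exp (s * Complex.log (((moeb γ z).im : ℝ) : ℂ))
          + F (moeb γ z) * (Complex.exp (s * Complex.log (((moeb γ z).im : ℝ) : ℂ))
            * (s * (((((moeb γ z).im : ℝ) : ℂ))⁻¹ * (jfac γ z ^ (-2 : ℤ) / (2 * I))))))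
          * Complex.exp (2 * π * I * m * moeb γ z)
        + F (moeb γ z) * Complex.exp (s * Complex.log (((moeb γ z).im : ℝ) : ℂ))
          * (Complex.exp (2 * π * I * m * moeb γ z) * (2 * π * I * m * jfac γ z ^ (-2 : ℤ))))
          * (jfac γ z ^ (-k : ℤ)
            * Complex.exp ((k : ℂ) / 2 * Complex.log ((Complex.normSq (jfac γ z) : ℝ) : ℂ)))
        + F (moeb γ z) * Complex.exp (s * Complex.log (((moeb γ z).im : ℝ) : ℂ))
          * Complex.exp (2 * π * I * m * moeb γ z)
          * (((-k : ℂ) * jfac γ z ^ (-k - 1) * ((γ : Matrix (Fin 2) (Fin 2) ℝ) 1 0 : ℂ))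
              * Complex.exp ((k : ℂ) / 2 * Complex.log ((Complex.normSq (jfac γ z) : ℝ) : ℂ))
            + jfac γ z ^ (-k : ℤ)
              * (Complex.exp ((k : ℂ) / 2 * Complex.log ((Complex.normSq (jfac γ z) : ℝ) : ℂ))
                * ((k : ℂ) / 2 * ((((Complex.normSq (jfac γ z) : ℝ) : ℂ))⁻¹
                  * (((γ : Matrix (Fin 2) (Fin 2) ℝ) 1 0 : ℂ) * starRingEnd ℂ (jfac γ z)))))) := by
    rw [wdz_congr hEq, wdz_mul hABCd hDd, wdz_mul hABd hCd, wdz_mul hAd hBd,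
      hA, hB, hC, hD]
  rw [Rop, hP, mufn_normal γ m s k F hz, mufn_normal γ m (s+1) (k+2) _ hz,
    mufn_normal γ m s (k+2) F hz, mufn_normal γ m (s+1) (k+2) F hz]
  have hYc : (((moeb γ z).im : ℝ) : ℂ) ≠ 0 := by exact_mod_cast hYr.ne'
  have hNc : ((Complex.normSq (jfac γ z) : ℝ) : ℂ) ≠ 0 := by exact_mod_cast hNr.ne'
  have e1 : Complex.exp ((s + 1) * Complex.log (((moeb γ z).im : ℝ) : ℂ))
      = Complex.exp (s * Complex.log (((moeb γ z).im : ℝ) : ℂ)) * (((moeb γ z).im : ℝ) : ℂ) := by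
    rw [show (s + 1) * Complex.log (((moeb γ z).im : ℝ) : ℂ)
        = s * Complex.log (((moeb γ z).im : ℝ) : ℂ)
          + Complex.log (((moeb γ z).im : ℝ) : ℂ) from by ring,
      Complex.exp_add, Complex.exp_log hYc]
  have e2 : Complex.exp (((k + 2 : ℤ) : ℂ) / 2
        * Complex.log ((Complex.normSq (jfac γ z) : ℝ) : ℂ))
      = Complex.exp ((k : ℂ) / 2 * Complex.log ((Complex.normSq (jfac γ z) : ℝ) : ℂ))
        * ((Complex.normSq (jfac γ z) : ℝ) : ℂ) := by
    rw [show ((k + 2 : ℤ) : ℂ) / 2 * Complex.log ((Complex.normSq (jfac γ z) : ℝ) : ℂ)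
        = (k : ℂ) / 2 * Complex.log ((Complex.normSq (jfac γ z) : ℝ) : ℂ)
          + Complex.log ((Complex.normSq (jfac γ z) : ℝ) : ℂ) from by push_cast; ring,
      Complex.exp_add, Complex.exp_log hNc]
  have e3 : jfac γ z ^ (-(k + 2) : ℤ)
      = jfac γ z ^ (-k : ℤ) * (jfac γ z)⁻¹ * (jfac γ z)⁻¹ := by
    rw [show (-(k + 2) : ℤ) = (-k - 1) - 1 from by ring, zpow_sub_one₀ hj, zpow_sub_one₀ hj]
  have e4 : jfac γ z ^ (-k - 1 : ℤ) = jfac γ z ^ (-k : ℤ) * (jfac γ z)⁻¹ :=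
    zpow_sub_one₀ hj (-k)
  have e5 : jfac γ z ^ (-2 : ℤ) = (jfac γ z)⁻¹ * (jfac γ z)⁻¹ := by
    rw [show (-2 : ℤ) = (-1 : ℤ) - 1 from by ring, zpow_sub_one₀ hj, zpow_neg_one]
  have hrel1 : ((Complex.normSq (jfac γ z) : ℝ) : ℂ)
      = jfac γ z * starRingEnd ℂ (jfac γ z) := (Complex.mul_conj _).symm
  have hrel2 : (((moeb γ z).im : ℝ) : ℂ) * ((Complex.normSq (jfac γ z) : ℝ) : ℂ)
      = ((z.im : ℝ) : ℂ) := by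
    rw [← Complex.ofReal_mul, moeb_im γ hz]
  have hrel3 : starRingEnd ℂ (jfac γ z)
      = jfac γ z - 2 * I * ((γ : Matrix (Fin 2) (Fin 2) ℝ) 1 0 : ℂ) * (z.im : ℂ) := by
    rw [jfac]
    simp only [map_add, map_mul, Complex.conj_ofReal]
    rw [show starRingEnd ℂ z = z - (2 * z.im : ℝ) * I from by
      linear_combination -Complex.sub_conj z]
    push_cast
    ring
  rw [e1, e2, e3, e4, e5]
  set jv := jfac γ z with hjv
  set wv := moeb γ z with hwv
  set cc := (((γ : Matrix (Fin 2) (Fin 2) ℝ) 1 0 : ℝ) : ℂ) with hcc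
  set Yc := ((wv.im : ℝ) : ℂ) with hYcd
  set Nc := ((Complex.normSq jv : ℝ) : ℂ) with hNcd
  set yc := ((z.im : ℝ) : ℂ) with hycd
  set cj := starRingEnd ℂ jv with hcjd
  set Fv := F wv with hFv
  set dF := wdz F wv with hdF
  set Bv := Complex.exp (s * Complex.log Yc) with hBv
  set Cv := Complex.exp (2 * π * I * (m : ℂ) * wv) with hCv
  set Ev := Complex.exp ((k : ℂ) / 2 * Complex.log Nc) with hEv
  set Jk := jv ^ (-k : ℤ) with hJk
  have hji : jv * jv⁻¹ = 1 := mul_inv_cancel₀ hj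
  have hYci : Yc * Yc⁻¹ = 1 := mul_inv_cancel₀ hYc
  have hIi : I * I⁻¹ = 1 := mul_inv_cancel₀ Complex.I_ne_zero
  have hII : I * I = -1 := Complex.I_mul_I
  have mini1 : 2*I*yc*(dF*jv⁻¹*jv⁻¹*Bv*Cv*Jk*Ev)
      = 2*I*(dF*Bv*Yc*Cv*Jk*jv⁻¹*jv⁻¹*Ev*Nc) := by
    linear_combination (-(2*I*dF*Bv*Cv*Jk*Ev*jv⁻¹*jv⁻¹)) * hrel2
  have mini2 : 2*I*yc*(Fv*Bv*s*Yc⁻¹*jv⁻¹*jv⁻¹/(2*I)*Cv*Jk*Ev)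
      = s*(Fv*Bv*Cv*Jk*jv⁻¹*jv⁻¹*Ev*Nc) := by
    linear_combination (-(s*Fv*Bv*Cv*Jk*Ev*jv⁻¹*jv⁻¹*I*I⁻¹*Yc⁻¹)) * hrel2
      + (s*Fv*Bv*Cv*Jk*Ev*jv⁻¹*jv⁻¹*Nc*Yc*Yc⁻¹) * hIi
      + (s*Fv*Bv*Cv*Jk*Ev*jv⁻¹*jv⁻¹*Nc) * hYci
  have mini3 : 2*I*yc*(Fv*Bv*Cv*(2*π*I*(m:ℂ))*jv⁻¹*jv⁻¹*Jk*Ev)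
      = -(4*π*(m:ℂ)*(Fv*Bv*Yc*Cv*Jk*jv⁻¹*jv⁻¹*Ev*Nc)) := by
    linear_combination (4*π*(m:ℂ)*Fv*Bv*Cv*Jk*Ev*jv⁻¹*jv⁻¹*yc) * hII
      + (4*π*(m:ℂ)*Fv*Bv*Cv*Jk*Ev*jv⁻¹*jv⁻¹) * hrel2
  have hcj0 : cj ≠ 0 := by
    rw [hcjd]
    simpa using hj
  have hw : (jv - 2*I*cc*yc) * (jv - 2*I*cc*yc)⁻¹ = 1 :=
    mul_inv_cancel₀ (by rw [← hrel3]; exact hcj0)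
  have hNinv : Nc⁻¹ * (cc * cj) = cc * jv⁻¹ := by
    rw [hrel1, mul_inv]
    have h5 : cj⁻¹ * cj = 1 := inv_mul_cancel₀ hcj0
    linear_combination (cc * jv⁻¹) * h5
  have mini4 : 2*I*yc*(Fv*Bv*Cv*(-(k:ℂ)*Jk*jv⁻¹*cc*Ev + Jk*Ev*((k:ℂ)/2)*(cc*jv⁻¹)))
        + (k:ℂ)/2*(Fv*Bv*Cv*Jk*Ev)
      = (k:ℂ)/2*(Fv*Bv*Cv*Jk*jv⁻¹*jv⁻¹*Ev*Nc) := by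
    rw [hrel1, hrel3]
    linear_combination ((k:ℂ)*Fv*Bv*Cv*Jk*Ev*(-(1/2)*(jv*jv⁻¹+1) + I*cc*yc*jv⁻¹)) * hji
  linear_combination mini1 + mini2 + mini3 + mini4
    + (2*I*yc*Fv*Bv*Cv*Jk*Ev*((k:ℂ)/2)) * hNinv
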